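/- arXiv:1710.04285 — 2 statements merged into one kernel-verified Lean document; each statement's English description precedes it below -/
import Mathlib

section
/- Let p be a prime, n a positive integer, and N a nonnegative integer. For an n×n matrix g over ℚ_p, say g ∈ X(N) if |g_{ij}|_p ≤ p^{(i+j-1)N} for all 1 ≤ i, j ≤ n (entries indexed from 1). Let u be an upper triangular unipotent n×n matrix over ℚ_p with |u_{ij}|_p ≤ p^{N} for all i < j. Then uᵀ · g · u ∈ X(N) if and only if g ∈ X(N). -/
open Finset IsUltrametricDist

section Aux

variable {p : ℕ} [Fact p.Prime] {n N : ℕ}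

private lemma aux_one_le_p : (1 : ℝ) ≤ (p : ℝ) := by
  exact_mod_cast (Fact.out : p.Prime).one_lt.le

/-- Conjugation bound for a general upper-triangular matrix `v` with
`‖v i j‖ ≤ p ^ ((j - i) * N)`. -/
private lemma aux_conj_bound (g v : Matrix (Fin n) (Fin n) ℚ_[p])
    (hv_low : ∀ i j : Fin n, j < i → v i j = 0)
    (hv_bound : ∀ i j : Fin n, ‖v i j‖ ≤ (p : ℝ) ^ (((j : ℕ) - (i : ℕ)) * N))
    (hg : ∀ i j : Fin n, ‖g i j‖ ≤ (p : ℝ) ^ (((i : ℕ) + (j : ℕ) + 1) * N)) :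
    ∀ i j : Fin n,
      ‖(v.transpose * g * v) i j‖ ≤ (p : ℝ) ^ (((i : ℕ) + (j : ℕ) + 1) * N) := by
  have hp1 : (1 : ℝ) ≤ (p : ℝ) := aux_one_le_p
  have hp0 : (0 : ℝ) < (p : ℝ) := lt_of_lt_of_le one_pos hp1
  intro i j
  rw [Matrix.mul_apply]
  refine norm_sum_le_of_forall_le_of_nonneg (by positivity) fun l _ ↦ ?_
  rw [Matrix.mul_apply, Finset.sum_mul]
  refine norm_sum_le_of_forall_le_of_nonneg (by positivity) fun k _ ↦ ?_
  simp only [Matrix.transpose_apply]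
  by_cases hk : (k : ℕ) ≤ (i : ℕ)
  · by_cases hl : (l : ℕ) ≤ (j : ℕ)
    · have h1 : ‖v k i‖ ≤ (p : ℝ) ^ (((i : ℕ) - (k : ℕ)) * N) := hv_bound k i
      have h2 : ‖g k l‖ ≤ (p : ℝ) ^ (((k : ℕ) + (l : ℕ) + 1) * N) := hg k l
      have h3 : ‖v l j‖ ≤ (p : ℝ) ^ (((j : ℕ) - (l : ℕ)) * N) := hv_bound l j
      have hexp : ((i : ℕ) - (k : ℕ)) * N + ((k : ℕ) + (l : ℕ) + 1) * N
          + ((j : ℕ) - (l : ℕ)) * N = ((i : ℕ) + (j : ℕ) + 1) * N := by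
        rw [← add_mul, ← add_mul]
        congr 1
        omega
      calc ‖v k i * g k l * v l j‖ = ‖v k i‖ * ‖g k l‖ * ‖v l j‖ := by
            rw [norm_mul, norm_mul]
        _ ≤ (p : ℝ) ^ (((i : ℕ) - (k : ℕ)) * N) * (p : ℝ) ^ (((k : ℕ) + (l : ℕ) + 1) * N)
            * (p : ℝ) ^ (((j : ℕ) - (l : ℕ)) * N) := by
            have := norm_nonneg (v k i)
            have := norm_nonneg (g k l)
            have := norm_nonneg (v l j)
            apply mul_le_mul (mul_le_mul h1 h2 (by assumption) (by positivity)) h3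
              (by assumption) (by positivity)
        _ = (p : ℝ) ^ (((i : ℕ) + (j : ℕ) + 1) * N) := by
            rw [← pow_add, ← pow_add, hexp]
    · have : v l j = 0 := hv_low l j (by exact Fin.lt_def.mpr (by omega))
      simp [this]
  · have : v k i = 0 := hv_low k i (by exact Fin.lt_def.mpr (by omega))
    simp [this]

/-- Bounds and vanishing for powers of a strictly upper triangular matrix. -/
private lemma aux_pow_bound (M : Matrix (Fin n) (Fin n) ℚ_[p])
    (hM_low : ∀ i j : Fin n, (j : ℕ) ≤ (i : ℕ) → M i j = 0)
    (hM_bound : ∀ i j : Fin n, ‖M i j‖ ≤ (p : ℝ) ^ N) :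
    ∀ k : ℕ, ∀ i j : Fin n,
      (((j : ℕ) < (i : ℕ) + k → (M ^ k) i j = 0) ∧
        ‖(M ^ k) i j‖ ≤ (p : ℝ) ^ (((j : ℕ) - (i : ℕ)) * N)) := by
  have hp1 : (1 : ℝ) ≤ (p : ℝ) := aux_one_le_p
  intro k
  induction k with
  | zero =>
    intro i j
    constructor
    · intro hij
      simp only [pow_zero, Matrix.one_apply]
      rw [if_neg]
      intro h; subst h; omega
    · simp only [pow_zero]
      by_cases h : i = j
      · subst h; simp [Matrix.one_apply_eq]
      · rw [Matrix.one_apply_ne h]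
        simp
  | succ m ih =>
    intro i j
    have hzero : ∀ i j : Fin n, (j : ℕ) < (i : ℕ) + (m + 1) → (M ^ (m + 1)) i j = 0 := by
      intro a b hab
      rw [pow_succ, Matrix.mul_apply]
      apply Finset.sum_eq_zero
      intro l _
      by_cases hl : (l : ℕ) < (a : ℕ) + m
      · rw [(ih a l).1 hl, zero_mul]
      · rw [hM_low l b (by omega), mul_zero]
    refine ⟨hzero i j, ?_⟩
    rw [pow_succ, Matrix.mul_apply]
    refine norm_sum_le_of_forall_le_of_nonneg (by positivity) fun l _ ↦ ?_
    by_cases hl : (l : ℕ) < (i : ℕ) + m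
    · rw [(ih i l).1 hl, zero_mul]
      simp
    · by_cases hj : (j : ℕ) ≤ (l : ℕ)
      · rw [hM_low l j hj, mul_zero]
        simp
      · -- i + m ≤ l < j
        have h1 : ‖(M ^ m) i l‖ ≤ (p : ℝ) ^ (((l : ℕ) - (i : ℕ)) * N) := (ih i l).2
        have h2 : ‖M l j‖ ≤ (p : ℝ) ^ N := hM_bound l j
        calc ‖(M ^ m) i l * M l j‖ = ‖(M ^ m) i l‖ * ‖M l j‖ := norm_mul _ _
          _ ≤ (p : ℝ) ^ (((l : ℕ) - (i : ℕ)) * N) * (p : ℝ) ^ N := by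
              apply mul_le_mul h1 h2 (norm_nonneg _) (by positivity)
          _ = (p : ℝ) ^ (((l : ℕ) - (i : ℕ)) * N + N) := by rw [← pow_add]
          _ ≤ (p : ℝ) ^ (((j : ℕ) - (i : ℕ)) * N) := by
              apply pow_le_pow_right₀ hp1
              have : (l : ℕ) - (i : ℕ) + 1 ≤ (j : ℕ) - (i : ℕ) := by omega
              calc ((l : ℕ) - (i : ℕ)) * N + N = ((l : ℕ) - (i : ℕ) + 1) * N := by ring
                _ ≤ ((j : ℕ) - (i : ℕ)) * N := Nat.mul_le_mul_right N this

end Aux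

/-- Invariance of the cutoff set `X(N)` (given by the entrywise bounds
`|g_{ij}|_p ≤ p^{(i+j-1)N}`, entries indexed from 1) under the twisted conjugation
`g ↦ uᵀ g u` by an upper triangular unipotent matrix `u` with `|u_{ij}|_p ≤ p^N` above
the diagonal. -/
theorem twisted_conj_mem_cutoff_iff
    (p : ℕ) [Fact p.Prime] (n : ℕ) (hn : 0 < n) (N : ℕ)
    (g u : Matrix (Fin n) (Fin n) ℚ_[p])
    (hu_diag : ∀ i, u i i = 1)
    (hu_low : ∀ i j : Fin n, j < i → u i j = 0)
    (hu_bound : ∀ i j : Fin n, i < j → ‖u i j‖ ≤ (p : ℝ) ^ N) :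
    (∀ i j : Fin n, ‖(u.transpose * g * u) i j‖ ≤ (p : ℝ) ^ (((i : ℕ) + (j : ℕ) + 1) * N)) ↔
      (∀ i j : Fin n, ‖g i j‖ ≤ (p : ℝ) ^ (((i : ℕ) + (j : ℕ) + 1) * N)) := by
  have hp1 : (1 : ℝ) ≤ (p : ℝ) := aux_one_le_p
  -- bound for u with the relaxed exponent
  have hu_bound' : ∀ i j : Fin n, ‖u i j‖ ≤ (p : ℝ) ^ (((j : ℕ) - (i : ℕ)) * N) := by
    intro i j
    rcases lt_trichotomy i j with h | h | h
    · refine (hu_bound i j h).trans (pow_le_pow_right₀ hp1 ?_)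
      have : 1 ≤ (j : ℕ) - (i : ℕ) := by
        have := Fin.lt_def.mp h; omega
      calc N = 1 * N := (one_mul N).symm
        _ ≤ ((j : ℕ) - (i : ℕ)) * N := Nat.mul_le_mul_right N this
    · subst h; rw [hu_diag i]
      simp
    · rw [hu_low i j h]
      simp
  constructor
  · -- hard direction: conjugate back by the inverse of u
    intro h
    set M : Matrix (Fin n) (Fin n) ℚ_[p] := u - 1 with hM
    have hM_low : ∀ i j : Fin n, (j : ℕ) ≤ (i : ℕ) → M i j = 0 := by
      intro i j hij
      rcases eq_or_lt_of_le hij with h' | h'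
      · have : i = j := Fin.ext h'.symm
        subst this
        simp [hM, hu_diag i]
      · simp [hM, hu_low i j (Fin.lt_def.mpr h'), Matrix.one_apply_ne (Fin.ne_of_gt (Fin.lt_def.mpr h'))]
    have hM_bound : ∀ i j : Fin n, ‖M i j‖ ≤ (p : ℝ) ^ N := by
      intro i j
      rcases lt_trichotomy i j with h' | h' | h'
      · have : M i j = u i j := by
          simp [hM, Matrix.one_apply_ne (Fin.ne_of_lt h')]
        rw [this]; exact hu_bound i j h'
      · subst h'; rw [hM_low i i le_rfl]
        simp
      · rw [hM_low i j (le_of_lt (Fin.lt_def.mp h'))]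
        simp
    have hMpow := aux_pow_bound M hM_low hM_bound
    have hMn : M ^ n = 0 := by
      ext i j
      exact (hMpow n i j).1 (by omega) |>.trans rfl
    set v : Matrix (Fin n) (Fin n) ℚ_[p] :=
      ∑ k ∈ Finset.range n, (-1 : ℚ_[p]) ^ k • M ^ k with hv
    have huv : u * v = 1 := by
      have hu' : u = 1 + M := by simp [hM]
      have key : u * v = ∑ k ∈ Finset.range n,
          ((-1 : ℚ_[p]) ^ k • M ^ k - (-1 : ℚ_[p]) ^ (k + 1) • M ^ (k + 1)) := by
        rw [hu', hv, add_mul, one_mul, Finset.mul_sum]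
        rw [← Finset.sum_add_distrib]
        apply Finset.sum_congr rfl
        intro k _
        rw [Matrix.mul_smul, ← pow_succ']
        rw [pow_succ (-1 : ℚ_[p]) k]
        rw [sub_eq_add_neg, ← neg_smul]
        ring_nf
      rw [key, Finset.sum_range_sub' (fun k => (-1 : ℚ_[p]) ^ k • M ^ k) n]
      simp [hMn]
    have hv_low : ∀ i j : Fin n, j < i → v i j = 0 := by
      intro i j hij
      rw [hv, Matrix.sum_apply]
      apply Finset.sum_eq_zero
      intro k _
      have : (M ^ k) i j = 0 := (hMpow k i j).1 (by have := Fin.lt_def.mp hij; omega)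
      simp [Matrix.smul_apply, this]
    have hv_bound : ∀ i j : Fin n, ‖v i j‖ ≤ (p : ℝ) ^ (((j : ℕ) - (i : ℕ)) * N) := by
      intro i j
      rw [hv, Matrix.sum_apply]
      refine norm_sum_le_of_forall_le_of_nonneg (by positivity) fun k _ ↦ ?_
      rw [Matrix.smul_apply, smul_eq_mul, norm_mul]
      have : ‖(-1 : ℚ_[p]) ^ k‖ = 1 := by
        rw [norm_pow, norm_neg, norm_one, one_pow]
      rw [this, one_mul]
      exact (hMpow k i j).2
    intro i j
    have hconj := aux_conj_bound (u.transpose * g * u) v hv_low hv_bound h i j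
    have hrw : v.transpose * (u.transpose * g * u) * v = g := by
      have : v.transpose * (u.transpose * g * u) * v
          = (u * v).transpose * g * (u * v) := by
        rw [Matrix.transpose_mul]
        noncomm_ring
      rw [this, huv]
      simp
    rwa [hrw] at hconj
  · intro h
    exact aux_conj_bound g u hu_low hu_bound' h
end

section
/- Let P be a polynomial function on the space M₂(ℂ) of 2×2 complex matrices (i.e. a polynomial in the four matrix entries) that is invariant under the two-sided action of SL₂(ℂ) × SL₂(ℂ): P(g·x·h) = P(x) for all g, h ∈ SL₂(ℂ) and all x ∈ M₂(ℂ). Then there exists a polynomial q in one variable with complex coefficients such that P(x) = q(det x) for all x ∈ M₂(ℂ). In other words, the algebra of SL₂ × SL₂-invariant polynomial functions on M₂(ℂ) is generated by the determinant. -/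
/-- A polynomial function on `M₂(ℂ)` that is invariant under the two-sided action of
`SL₂(ℂ) × SL₂(ℂ)` is a polynomial in the determinant. -/
theorem invariant_polynomial_on_M2_eq_poly_det
    (P : MvPolynomial (Fin 2 × Fin 2) ℂ)
    (hP : ∀ (g h : Matrix.SpecialLinearGroup (Fin 2) ℂ) (x : Matrix (Fin 2) (Fin 2) ℂ),
      MvPolynomial.eval
          (fun q : Fin 2 × Fin 2 =>
            ((g : Matrix (Fin 2) (Fin 2) ℂ) * x * (h : Matrix (Fin 2) (Fin 2) ℂ)) q.1 q.2) P =
        MvPolynomial.eval (fun q : Fin 2 × Fin 2 => x q.1 q.2) P) :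
    ∃ Q : Polynomial ℂ, ∀ x : Matrix (Fin 2) (Fin 2) ℂ,
      MvPolynomial.eval (fun q : Fin 2 × Fin 2 => x q.1 q.2) P = Polynomial.eval x.det Q := by
  classical
  set f : Fin 2 × Fin 2 → Polynomial ℂ :=
    fun p => (!![Polynomial.X, 0; 0, 1] : Matrix (Fin 2) (Fin 2) (Polynomial ℂ)) p.1 p.2 with hf
  set Q : Polynomial ℂ := MvPolynomial.aeval f P with hQ
  refine ⟨Q, ?_⟩
  -- evaluation of Q at a scalar d
  have hQeval : ∀ d : ℂ, Polynomial.eval d Q =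
      MvPolynomial.eval (fun p : Fin 2 × Fin 2 =>
        (!![d, 0; 0, 1] : Matrix (Fin 2) (Fin 2) ℂ) p.1 p.2) P := by
    intro d
    have h1 : Polynomial.eval d Q = Polynomial.aeval d Q := by
      rw [← Polynomial.coe_aeval_eq_eval]
    rw [h1, hQ, MvPolynomial.comp_aeval_apply (f := f) (Polynomial.aeval d) P]
    rw [show (MvPolynomial.aeval fun i => Polynomial.aeval d (f i) :
        MvPolynomial (Fin 2 × Fin 2) ℂ →ₐ[ℂ] ℂ) P
        = MvPolynomial.eval (fun i => Polynomial.aeval d (f i)) P from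
      congrFun (congrArg DFunLike.coe (MvPolynomial.coe_aeval_eq_eval _)) P]
    have hfd : (fun i => Polynomial.aeval d (f i))
        = fun p : Fin 2 × Fin 2 => (!![d, 0; 0, 1] : Matrix (Fin 2) (Fin 2) ℂ) p.1 p.2 := by
      funext p
      fin_cases p <;> simp [hf]
    rw [hfd]
  -- key: invertible case
  have key : ∀ x : Matrix (Fin 2) (Fin 2) ℂ, x.det ≠ 0 →
      MvPolynomial.eval (fun q : Fin 2 × Fin 2 => x q.1 q.2) P = Polynomial.eval x.det Q := by
    intro x hx
    set d := x.det with hd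
    set D : Matrix (Fin 2) (Fin 2) ℂ := !![d, 0; 0, 1] with hD
    have hDdet : D.det = d := by simp [hD]
    set g := x * D⁻¹ with hg
    have hgdet : g.det = 1 := by
      rw [hg, Matrix.det_mul, Matrix.det_nonsing_inv, hDdet, ← hd]
      exact Ring.mul_inverse_cancel d (isUnit_iff_ne_zero.2 hx)
    have hgD : g * D = x := by
      rw [hg, Matrix.mul_assoc, Matrix.nonsing_inv_mul D (by rw [hDdet]; exact isUnit_iff_ne_zero.2 hx),
        Matrix.mul_one]
    have h2 := hP ⟨g, hgdet⟩ 1 D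
    simp only [Matrix.SpecialLinearGroup.coe_one, Matrix.mul_one] at h2
    rw [hgD] at h2
    exact h2.trans (hQeval d).symm
  -- polynomial identity via density of invertibles
  set detMv : MvPolynomial (Fin 2 × Fin 2) ℂ :=
    MvPolynomial.X (0, 0) * MvPolynomial.X (1, 1)
      - MvPolynomial.X (0, 1) * MvPolynomial.X (1, 0) with hdetMv
  have hdetEval : ∀ v : Fin 2 × Fin 2 → ℂ,
      MvPolynomial.eval v detMv = (Matrix.of fun i j => v (i, j)).det := by
    intro v
    rw [Matrix.det_fin_two]
    simp [hdetMv]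
  set QD : MvPolynomial (Fin 2 × Fin 2) ℂ := Polynomial.aeval detMv Q with hQD
  have hQDeval : ∀ v : Fin 2 × Fin 2 → ℂ,
      MvPolynomial.eval v QD = Polynomial.eval (MvPolynomial.eval v detMv) Q := by
    intro v
    rw [hQD, ← Polynomial.coe_aeval_eq_eval]
    rw [show MvPolynomial.eval v (Polynomial.aeval detMv Q)
        = MvPolynomial.aeval v (Polynomial.aeval detMv Q) from
      (congrFun (congrArg DFunLike.coe (MvPolynomial.coe_aeval_eq_eval v)) _).symm]
    rw [← Polynomial.aeval_algHom_apply (MvPolynomial.aeval v) detMv Q]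
    rw [show MvPolynomial.aeval v detMv = MvPolynomial.eval v detMv from
      congrFun (congrArg DFunLike.coe (MvPolynomial.coe_aeval_eq_eval v)) _]
  have hzero : detMv * P = detMv * QD := by
    apply MvPolynomial.funext
    intro v
    simp only [map_mul]
    set x : Matrix (Fin 2) (Fin 2) ℂ := Matrix.of fun i j => v (i, j) with hx
    have hvx : (fun q : Fin 2 × Fin 2 => x q.1 q.2) = v := by funext q; simp [hx]
    by_cases h : x.det = 0
    · rw [hdetEval v, ← hx, h, zero_mul, zero_mul]
    · congr 1
      rw [hQDeval v, hdetEval v, ← hx, ← hvx]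
      exact key x h
  have hdetMv_ne : detMv ≠ 0 := by
    intro h
    have := congrArg (MvPolynomial.eval fun p : Fin 2 × Fin 2 =>
      if p.1 = p.2 then (1 : ℂ) else 0) h
    simp [hdetMv] at this
  have hPQ : P = QD := mul_left_cancel₀ hdetMv_ne hzero
  intro x
  rw [hPQ, hQDeval, hdetEval]
  rfl
end
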